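/- arXiv:2507.04286 — 4 statements merged into one kernel-verified Lean document; each statement's English description precedes it below -/
import Mathlib

section
/- Let X be a set, f : X → X a function, A ⊆ X, V : X → ℝ, and x₀ ∈ X. Suppose V(x₀) ≥ 0; for all x with V(x) ≥ 0 we have V(f(x)) ≥ 0; and for all x ∉ A with V(x) ≥ 0 we have V(x) − 1 ≥ V(f(x)). Then the orbit x₀, f(x₀), f(f(x₀)), … visits A infinitely often: the set {n : f^[n](x₀) ∈ A} is infinite. -/
theorem stmt_4 (X : Type*) (f : X → X) (A : Set X) (V : X → ℝ) (x₀ : X)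
    (h0 : V x₀ ≥ 0)
    (hpres : ∀ x, V x ≥ 0 → V (f x) ≥ 0)
    (hdec : ∀ x, x ∉ A → V x ≥ 0 → V x - 1 ≥ V (f x)) :
    {n : ℕ | f^[n] x₀ ∈ A}.Infinite := by
  have hnn : ∀ n, V (f^[n] x₀) ≥ 0 := by
    intro n
    induction n with
    | zero => simpa using h0
    | succ k ih =>
      rw [Function.iterate_succ_apply']
      exact hpres _ ih
  by_contra hfin
  rw [Set.not_infinite] at hfin
  obtain ⟨N, hN⟩ := hfin.bddAbove
  have hout : ∀ n, N < n → f^[n] x₀ ∉ A := by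
    intro n hn hmem
    exact absurd (hN hmem) (not_le.mpr hn)
  have key : ∀ k : ℕ, V (f^[N + 1 + k] x₀) ≤ V (f^[N + 1] x₀) - k := by
    intro k
    induction k with
    | zero => simp
    | succ m ih =>
      have hstep := hdec (f^[N + 1 + m] x₀) (hout _ (by omega)) (hnn _)
      have : V (f^[N + 1 + (m + 1)] x₀) = V (f (f^[N + 1 + m] x₀)) := by
        rw [show N + 1 + (m + 1) = (N + 1 + m) + 1 by ring, Function.iterate_succ_apply']
      rw [this]
      push_cast
      linarith
  obtain ⟨k, hk⟩ := exists_nat_gt (V (f^[N + 1] x₀))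
  have := key k
  have := hnn (N + 1 + k)
  linarith
end

section
/- Let X be a set, f : X → X, A ⊆ X, and suppose I ⊆ X and V : X → ℝ satisfy: x₀ ∈ I and V(x₀) ≥ 0; for all x ∈ I with V(x) ≥ 0, f(x) ∈ I and V(f(x)) ≥ 0; and for all x ∈ I \ A with V(x) ≥ 0, V(x) − 1 ≥ V(f(x)). Then every iterate f^[n](x₀) lies in I, and the orbit of x₀ under f visits A infinitely often. -/
theorem stmt_5 (X : Type*) (f : X → X) (A : Set X) (I : Set X) (V : X → ℝ) (x₀ : X)
    (h0I : x₀ ∈ I) (h0V : V x₀ ≥ 0)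
    (hpres : ∀ x, x ∈ I → V x ≥ 0 → f x ∈ I ∧ V (f x) ≥ 0)
    (hdec : ∀ x, x ∈ I \ A → V x ≥ 0 → V x - 1 ≥ V (f x)) :
    (∀ n, f^[n] x₀ ∈ I) ∧ {n : ℕ | f^[n] x₀ ∈ A}.Infinite := by
  have inv : ∀ n, f^[n] x₀ ∈ I ∧ V (f^[n] x₀) ≥ 0 := by
    intro n
    induction n with
    | zero => exact ⟨h0I, h0V⟩
    | succ n ih =>
      rw [Function.iterate_succ_apply']
      exact hpres _ ih.1 ih.2
  refine ⟨fun n => (inv n).1, ?_⟩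
  apply Set.infinite_of_forall_exists_gt
  intro N
  by_contra h
  push_neg at h
  have hnot : ∀ k, f^[N + 1 + k] x₀ ∉ A := by
    intro k hk
    have := h _ hk; omega
  have hdec' : ∀ k, V (f^[N + 1 + k] x₀) ≤ V (f^[N + 1] x₀) - k := by
    intro k
    induction k with
    | zero => simp
    | succ k ih =>
      have h1 := hdec _ ⟨(inv (N + 1 + k)).1, hnot k⟩ (inv (N + 1 + k)).2
      have : N + 1 + (k + 1) = (N + 1 + k) + 1 := by omega
      rw [this, Function.iterate_succ_apply']
      push_cast
      linarith
  obtain ⟨k, hk⟩ := exists_nat_gt (V (f^[N + 1] x₀))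
  have := hdec' k
  have := (inv (N + 1 + k)).2
  linarith
end

section
/- Let X be a countable set, f : X → X, A ⊆ X, and x₀ ∈ X. If the orbit of x₀ under f visits A infinitely often, then there exist a set I ⊆ X and a function V : X → ℝ such that: x₀ ∈ I and V(x₀) ≥ 0; for all x ∈ I with V(x) ≥ 0, f(x) ∈ I and V(f(x)) ≥ 0; and for all x ∈ I \ A with V(x) ≥ 0, V(x) − 1 ≥ V(f(x)). -/
theorem stmt_6 (X : Type*) [Countable X] (f : X → X) (A : Set X) (x₀ : X)
    (hio : {n : ℕ | f^[n] x₀ ∈ A}.Infinite) :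
    ∃ (I : Set X) (V : X → ℝ),
      (x₀ ∈ I ∧ V x₀ ≥ 0) ∧
      (∀ x, x ∈ I → V x ≥ 0 → f x ∈ I ∧ V (f x) ≥ 0) ∧
      (∀ x, x ∈ I \ A → V x ≥ 0 → V x - 1 ≥ V (f x)) := by
  classical
  set I : Set X := Set.range (fun n => f^[n] x₀) with hIdef
  have hI : ∀ x ∈ I, ∃ k, f^[k] x ∈ A := by
    rintro x ⟨n, rfl⟩
    obtain ⟨m, hm, hmn⟩ := hio.exists_gt n
    refine ⟨m - n, ?_⟩
    have : f^[m - n] (f^[n] x₀) = f^[m] x₀ := by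
      rw [← Function.iterate_add_apply, Nat.sub_add_cancel hmn.le]
    rw [this]; exact hm
  have hIf : ∀ x ∈ I, f x ∈ I := by
    rintro x ⟨n, rfl⟩
    exact ⟨n + 1, by simp [Function.iterate_succ_apply']⟩
  set V : X → ℝ := fun x => if h : ∃ k, f^[k] x ∈ A then ((Nat.find h : ℕ) : ℝ) else -1
    with hVdef
  have hVpos : ∀ x, (∃ k, f^[k] x ∈ A) → V x ≥ 0 := by
    intro x h
    simp only [hVdef, dif_pos h]
    exact Nat.cast_nonneg _
  refine ⟨I, V, ⟨⟨0, rfl⟩, hVpos _ (hI _ ⟨0, rfl⟩)⟩, ?_, ?_⟩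
  · intro x hx _
    exact ⟨hIf x hx, hVpos _ (hI _ (hIf x hx))⟩
  · rintro x ⟨hxI, hxA⟩ hVx
    have h : ∃ k, f^[k] x ∈ A := hI x hxI
    have hne : Nat.find h ≠ 0 := by
      intro h0
      have := Nat.find_spec h
      rw [h0] at this
      exact hxA this
    have key : f^[Nat.find h - 1] (f x) = f^[Nat.find h] x := by
      rw [← Function.iterate_succ_apply]
      congr 1
      omega
    have hfx : ∃ k, f^[k] (f x) ∈ A := ⟨Nat.find h - 1, key ▸ Nat.find_spec h⟩
    have hle : Nat.find hfx ≤ Nat.find h - 1 :=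
      Nat.find_min' hfx (key ▸ Nat.find_spec h)
    simp only [hVdef, dif_pos h, dif_pos hfx]
    have h1 : (1 : ℕ) ≤ Nat.find h := Nat.one_le_iff_ne_zero.mpr hne
    have : (Nat.find hfx : ℝ) ≤ (Nat.find h : ℝ) - 1 := by
      have := Nat.cast_le (α := ℝ).mpr hle
      rwa [Nat.cast_sub h1, Nat.cast_one] at this
    linarith
end

section
/- Let X be a set, R ⊆ X × X a relation (possibly non-deterministic transitions), A ⊆ X, and suppose V : X → ℝ and I ⊆ X satisfy: for all x ∈ I with V(x) ≥ 0 and x ∈ A, there exists y with R x y, y ∈ I, and V(y) ≥ 0; and for all x ∈ I with V(x) ≥ 0 and x ∉ A, there exists y with R x y, y ∈ I, and V(x) − 1 ≥ V(y) ≥ 0. Then for every x₀ ∈ I with V(x₀) ≥ 0 there exists an infinite R-path x₀, x₁, x₂, … with x_n ∈ I for all n and x_n ∈ A for infinitely many n. -/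
theorem stmt_17 (X : Type*) (R : X → X → Prop) (A : Set X) (I : Set X) (V : X → ℝ)
    (hacc : ∀ x, x ∈ I → V x ≥ 0 → x ∈ A →
      ∃ y, R x y ∧ y ∈ I ∧ V y ≥ 0)
    (hnonacc : ∀ x, x ∈ I → V x ≥ 0 → x ∉ A →
      ∃ y, R x y ∧ y ∈ I ∧ V x - 1 ≥ V y ∧ V y ≥ 0)
    (x₀ : X) (h0I : x₀ ∈ I) (h0V : V x₀ ≥ 0) :
    ∃ p : ℕ → X, p 0 = x₀ ∧ (∀ n, R (p n) (p (n + 1))) ∧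
      (∀ n, p n ∈ I) ∧ {n : ℕ | p n ∈ A}.Infinite := by
  -- step function on the good subtype
  have step : ∀ x : X, x ∈ I → V x ≥ 0 →
      ∃ y, R x y ∧ y ∈ I ∧ V y ≥ 0 ∧ (x ∉ A → V x - 1 ≥ V y) := by
    intro x hI hV
    by_cases hA : x ∈ A
    · obtain ⟨y, h1, h2, h3⟩ := hacc x hI hV hA
      exact ⟨y, h1, h2, h3, fun h => absurd hA h⟩
    · obtain ⟨y, h1, h2, h3, h4⟩ := hnonacc x hI hV hA
      exact ⟨y, h1, h2, h4, fun _ => h3⟩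
  let T := {x : X // x ∈ I ∧ V x ≥ 0}
  have f : ∀ t : T, {y : T // R t.1 y.1 ∧ (t.1 ∉ A → V t.1 - 1 ≥ V y.1)} := by
    intro t
    choose y h1 h2 h3 h4 using step t.1 t.2.1 t.2.2
    exact ⟨⟨y, h2, h3⟩, h1, h4⟩
  let q : ℕ → T := fun n => Nat.rec ⟨x₀, h0I, h0V⟩ (fun _ t => (f t).1) n
  have hq : ∀ n, q (n + 1) = (f (q n)).1 := fun n => rfl
  refine ⟨fun n => (q n).1, rfl, fun n => ((f (q n)).2).1, fun n => (q n).2.1, ?_⟩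
  rw [Set.infinite_coe_iff.symm]
  by_contra hfin
  rw [not_infinite_iff_finite] at hfin
  have hfin' : {n : ℕ | (q n).1 ∈ A}.Finite := Set.toFinite _
  obtain ⟨N, hN⟩ := hfin'.bddAbove
  -- for n > N, (q n).1 ∉ A
  have hnot : ∀ n, N < n → (q n).1 ∉ A := by
    intro n hn hA
    exact absurd (hN hA) (not_le.mpr hn)
  have hdec : ∀ k : ℕ, V ((q (N + 1 + k)).1) ≤ V ((q (N + 1)).1) - k := by
    intro k
    induction k with
    | zero => simp
    | succ k ih =>
      have h1 : V ((q (N + 1 + k)).1) - 1 ≥ V ((q (N + 1 + k + 1)).1) :=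
        ((f (q (N + 1 + k))).2).2 (hnot _ (by omega))
      have : N + 1 + (k + 1) = N + 1 + k + 1 := by omega
      rw [this]
      push_cast
      linarith
  obtain ⟨k, hk⟩ := exists_nat_gt (V ((q (N + 1)).1))
  have := hdec k
  have := (q (N + 1 + k)).2.2
  linarith
end
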